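/- The visibility polynomial of the cycle C_n (n ≥ 3) is V(C_n) = 1 + n·x + C(n,2)·x² + r₃·x³, where r₃ = n(n²−1)/24 if n is odd and r₃ = (n−2)n(n+8)/24 if n is even; in particular the mutual-visibility number of C_n is 3. -/

import Mathlib

open SimpleGraph Polynomial

/-- Two vertices `u`, `v` are `X`-visible in `G` if some shortest `u`\u2013`v` path
has no internal vertex in `X`. -/
def SimpleGraph.XVisible {V : Type*} (G : SimpleGraph V) (X : Set V) (u v : V) : Prop :=
  ∃ p : G.Walk u v, p.IsPath ∧ p.length = G.dist u v ∧
    ∀ w ∈ p.support, w ∈ X → w = u ∨ w = v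

/-- `X` is a mutual-visibility set of `G`. -/
def SimpleGraph.IsMutualVisibilitySet {V : Type*} (G : SimpleGraph V) (X : Set V) : Prop :=
  ∀ u ∈ X, ∀ v ∈ X, G.XVisible X u v


open scoped Classical in
/-- The visibility polynomial `∑ r_i x^i`, where `r_i` is the number of
mutual-visibility sets of cardinality `i`. -/
noncomputable def visPoly {V : Type*} (G : SimpleGraph V) [Fintype V] : Polynomial ℤ :=
  ∑ X : Finset V, if G.IsMutualVisibilitySet ↑X then (Polynomial.X ^ X.card : Polynomial ℤ) else 0

/-!
Write vertices of `C_n` as `Fin n` and measure positions from a base point `u` by the offset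
`(w - u).val`. Two vertices `x`, `y` cut the cycle into two arcs, and a walk avoiding both stays
on one side, so every `u`–`v` walk covers the forward or the backward open arc from `u` to `v`.
Hence `dist u v = min (v - u) (u - v)`, and `u`, `v` are `X`-visible iff one of the two arcs has
length at most `n / 2` and no vertex of `X` inside.

If `X` has four vertices, take `u ∈ X` and three others at offsets `a < c < b` from `u`: then `c`
lies inside one arc between `a` and `b` and `u` inside the other, so `a`, `b` are not visible.
Three vertices cutting the cycle into gaps `s`, `t - s`, `n - t` are in mutual visibility iff every
gap is at most `n / 2`. Read from any of its three vertices `a`, such a triple is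
`{a, a + s, a + t}` for exactly one such pair `(s, t)`; double counting gives
`3 r₃ = n · #{(s, t)}`, and the pairs are counted column by column in `s`.
-/

open Finset Fin.NatCast

namespace Fin

variable {n : ℕ} [NeZero n]

theorem val_sub_add_val_sub (u x w : Fin n) :
    (w - x).val + (x - u).val = (w - u).val ∨ (w - x).val + (x - u).val = (w - u).val + n := by
  have h := Fin.val_add (w - x) (x - u)
  rw [sub_add_sub_cancel] at h
  rcases lt_or_ge ((w - x).val + (x - u).val) n with hlt | hge
  · exact .inl (by rw [h, Nat.mod_eq_of_lt hlt])
  · right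
    rw [h, Nat.mod_eq_sub_mod hge, Nat.mod_eq_of_lt (by omega)]
    omega

theorem val_sub_eq_zero_iff {u v : Fin n} : (v - u).val = 0 ↔ v = u := by
  rw [Fin.val_eq_zero_iff, sub_eq_zero]

theorem val_sub_inj {u v w : Fin n} : (v - u).val = (w - u).val ↔ v = w := by
  rw [Fin.val_inj, sub_left_inj]

theorem val_sub_add_val_sub_of_ne {u v : Fin n} (h : u ≠ v) : (v - u).val + (u - v).val = n := by
  have := val_sub_add_val_sub v u v
  have := val_sub_eq_zero_iff.not.mpr h
  simp only [sub_self, val_zero] at *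
  omega

theorem val_add_natCast_sub (u : Fin n) {s : ℕ} (hs : s < n) : (u + (s : Fin n) - u).val = s := by
  rw [add_sub_cancel_left, Fin.val_natCast, Nat.mod_eq_of_lt hs]

theorem add_natCast_val_sub (u w : Fin n) : u + ((w - u).val : Fin n) = w := by
  rw [Fin.cast_val_eq_self, add_sub_cancel]

theorem add_natCast_triple_inj {a : Fin n} {s t s' t' : ℕ} (hs : 0 < s) (hst : s < t)
    (ht : t < n) (hs' : 0 < s') (hst' : s' < t') (ht' : t' < n)
    (h : ({a, a + (s : Fin n), a + (t : Fin n)} : Finset (Fin n)) =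
      {a, a + (s' : Fin n), a + (t' : Fin n)}) :
    s = s' ∧ t = t' := by
  have himg := congrArg (image fun w => (w - a).val) h
  simp only [image_insert, image_singleton, sub_self, val_zero, val_add_natCast_sub a ht,
    val_add_natCast_sub a ht', val_add_natCast_sub a (hst.trans ht),
    val_add_natCast_sub a (hst'.trans ht')] at himg
  have hs := Finset.ext_iff.mp himg s
  have ht := Finset.ext_iff.mp himg t
  have hs' := Finset.ext_iff.mp himg s'
  have ht' := Finset.ext_iff.mp himg t'
  simp only [mem_insert, mem_singleton, true_or, or_true, iff_true, true_iff] at hs ht hs' ht'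
  omega

theorem val_sub_lt_iff_of_val_sub_eq_one {x y w w' : Fin n} (h : (w' - w).val = 1)
    (hx : w' ≠ x) (hy : w' ≠ y) : (w - x).val < (y - x).val ↔ (w' - x).val < (y - x).val := by
  have := val_sub_add_val_sub x w w'
  have := val_sub_eq_zero_iff.not.mpr hx
  have := val_sub_inj (u := x).not.mpr hy
  omega

theorem card_filter_val_sub_le (u v : Fin n) :
    #{w | (w - u).val ≤ (v - u).val} = (v - u).val + 1 := by
  have : ({w | (w - u).val ≤ (v - u).val} : Finset (Fin n)) =
      (Iic (v - u)).map (Equiv.addLeft u).toEmbedding := by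
    ext w
    simp [Finset.mem_map_equiv, neg_add_eq_sub]
  rw [this, card_map, Fin.card_Iic]

def openArc (u v : Fin n) : Finset (Fin n) := {w | 0 < (w - u).val ∧ (w - u).val < (v - u).val}

theorem mem_openArc {u v w : Fin n} :
    w ∈ openArc u v ↔ 0 < (w - u).val ∧ (w - u).val < (v - u).val := by
  simp [openArc]

theorem ne_left_of_mem_openArc {u v w : Fin n} (h : w ∈ openArc u v) : w ≠ u := by
  rw [mem_openArc] at h
  exact val_sub_eq_zero_iff.not.mp (by omega)

theorem ne_right_of_mem_openArc {u v w : Fin n} (h : w ∈ openArc u v) : w ≠ v := by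
  rw [mem_openArc] at h
  exact (val_sub_inj (u := u)).not.mp (by omega)

theorem mem_openArc_of_le {u v w : Fin n} (h : (w - u).val ≤ (v - u).val) (hu : w ≠ u)
    (hv : w ≠ v) : w ∈ openArc u v := by
  have := val_sub_eq_zero_iff.not.mpr hu
  have := val_sub_inj (u := u).not.mpr hv
  rw [mem_openArc]
  omega

theorem mem_openArc_of_lt {u a b c : Fin n} (hac : (a - u).val < (c - u).val)
    (hcb : (c - u).val < (b - u).val) : c ∈ openArc a b := by
  have := val_sub_add_val_sub u a c
  have := val_sub_add_val_sub u a b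
  rw [mem_openArc]
  omega

theorem mem_openArc_rotate {a b c : Fin n} (h : b ∈ openArc a c) : c ∈ openArc b a := by
  have := val_sub_add_val_sub a b c
  have := val_sub_add_val_sub_of_ne (ne_left_of_mem_openArc h).symm
  rw [mem_openArc] at h ⊢
  omega

theorem notMem_openArc_swap {u v w : Fin n} (h : w ∈ openArc u v) : w ∉ openArc v u := by
  rw [mem_openArc] at h ⊢
  have := val_sub_add_val_sub u v w
  have := val_sub_add_val_sub_of_ne (u := u) (v := v) (by rintro rfl; simp at h)
  omega

def IsClearArc (X : Set (Fin n)) (u v : Fin n) : Prop :=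
  2 * (v - u).val ≤ n ∧ ∀ w ∈ openArc u v, w ∉ X

end Fin

namespace SimpleGraph

variable {V : Type*} {G : SimpleGraph V} {X : Set V}

theorem XVisible.refl (X : Set V) (u : V) : G.XVisible X u u :=
  ⟨Walk.nil, Walk.IsPath.nil, dist_self.symm, by simp⟩

theorem XVisible.symm {u v : V} (h : G.XVisible X u v) : G.XVisible X v u := by
  obtain ⟨p, hp, hlen, hX⟩ := h
  refine ⟨p.reverse, hp.reverse, by rw [Walk.length_reverse, hlen, dist_comm], ?_⟩
  intro w hw hwX
  exact (hX w (by simpa using hw) hwX).symm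

theorem isMutualVisibilitySet_triple_iff {a b c : V} :
    G.IsMutualVisibilitySet {a, b, c} ↔
      G.XVisible {a, b, c} a b ∧ G.XVisible {a, b, c} b c ∧ G.XVisible {a, b, c} c a := by
  refine ⟨fun h => ⟨h a (by simp) b (by simp), h b (by simp) c (by simp),
    h c (by simp) a (by simp)⟩, fun ⟨hab, hbc, hca⟩ => ?_⟩
  rintro u (rfl | rfl | rfl) v (rfl | rfl | rfl)
  all_goals first
    | exact XVisible.refl _ _
    | assumption
    | exact XVisible.symm ‹_›

theorem Preconnected.isMutualVisibilitySet_of_card_le_two (hG : G.Preconnected)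
    {X : Finset V} (hX : X.card ≤ 2) : G.IsMutualVisibilitySet ↑X := by
  classical
  intro u hu v hv
  rw [Finset.mem_coe] at hu hv
  obtain rfl | huv := eq_or_ne u v
  · exact XVisible.refl _ _
  have hXuv : X = {u, v} :=
    (Finset.eq_of_subset_of_card_le (by simp [Finset.insert_subset_iff, hu, hv])
      (by rwa [Finset.card_pair huv])).symm
  obtain ⟨p, hp⟩ := (hG u v).exists_walk_length_eq_dist
  exact ⟨p, p.isPath_of_length_eq_dist hp, hp, by simp [hXuv]⟩

open scoped Classical in
theorem Preconnected.card_isMutualVisibilitySet_of_le_two [Fintype V] (hG : G.Preconnected)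
    {k : ℕ} (hk : k ≤ 2) :
    #{X : Finset V | G.IsMutualVisibilitySet ↑X ∧ X.card = k} = (Fintype.card V).choose k := by
  rw [filter_congr fun X _ => and_iff_right_of_imp fun hX =>
      hG.isMutualVisibilitySet_of_card_le_two (hX ▸ hk),
    ← powerset_univ, ← powersetCard_eq_filter, card_powersetCard, card_univ]

open scoped Classical in
theorem visPoly_coeff [Fintype V] (G : SimpleGraph V) (k : ℕ) :
    (visPoly G).coeff k = #{X : Finset V | G.IsMutualVisibilitySet ↑X ∧ X.card = k} := by
  simp only [visPoly, Polynomial.finsetSum_coeff, apply_ite (Polynomial.coeff · k),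
    Polynomial.coeff_X_pow, Polynomial.coeff_zero, ← ite_and, eq_comm (a := k)]
  rw [Finset.sum_boole]

end SimpleGraph

namespace SimpleGraph

open Fin

variable {n : ℕ} [NeZero n] {X : Set (Fin n)} {u v : Fin n}

theorem cycleGraph_exists_arc_walk (hn : 1 < n) (u v : Fin n) :
    ∃ p : (cycleGraph n).Walk u v,
      p.length = (v - u).val ∧ ∀ w ∈ p.support, (w - u).val ≤ (v - u).val := by
  obtain ⟨d, hd⟩ : ∃ d, (v - u).val = d := ⟨_, rfl⟩
  induction d generalizing v with
  | zero =>
    obtain rfl := val_sub_eq_zero_iff.mp hd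
    exact ⟨Walk.nil, by simp, by simp⟩
  | succ d ih =>
    have hv : v - u ≠ 0 := fun h => by simp [h] at hd
    have hd' : (v - 1 - u).val = d := by
      rw [sub_right_comm, val_sub_one_of_ne_zero hv, hd, Nat.add_sub_cancel]
    obtain ⟨p, hp, hsupp⟩ := ih (v - 1) hd'
    have hadj : (cycleGraph n).Adj (v - 1) v :=
      cycleGraph_adj'.mpr (.inr (by rw [sub_sub_cancel, val_one', Nat.mod_eq_of_lt hn]))
    refine ⟨p.concat hadj, by simp [hp, hd, hd'], fun w hw => ?_⟩
    rw [Walk.support_concat, List.mem_append, List.mem_singleton] at hw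
    rcases hw with hw | rfl
    · have := hsupp w hw
      omega
    · exact le_rfl

theorem cycleGraph_walk_val_sub_lt_iff {x y : Fin n} (p : (cycleGraph n).Walk u v)
    (hx : x ∉ p.support) (hy : y ∉ p.support) :
    (u - x).val < (y - x).val ↔ (v - x).val < (y - x).val := by
  induction p with
  | nil => rfl
  | @cons u w v h q ih =>
    simp only [Walk.support_cons, List.mem_cons, not_or] at hx hy
    rw [← ih hx.2 hy.2]
    have hw : w ∈ q.support := q.start_mem_support
    rcases cycleGraph_adj'.mp h with h | h
    · exact (val_sub_lt_iff_of_val_sub_eq_one h (Ne.symm hx.1) (Ne.symm hy.1)).symm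
    · exact val_sub_lt_iff_of_val_sub_eq_one h (fun h => hx.2 (h ▸ hw))
        (fun h => hy.2 (h ▸ hw))

theorem cycleGraph_openArc_subset_support_or (p : (cycleGraph n).Walk u v) :
    openArc u v ⊆ p.support.toFinset ∨ openArc v u ⊆ p.support.toFinset := by
  by_contra! h
  obtain ⟨⟨x, hx, hxp⟩, ⟨y, hy, hyp⟩⟩ := And.imp not_subset.mp not_subset.mp h
  rw [List.mem_toFinset] at hxp hyp
  have hside := cycleGraph_walk_val_sub_lt_iff p hxp hyp
  rw [mem_openArc] at hx hy
  -- measured from `x`, the vertex `v` comes before `y` and `u` after it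
  have := val_sub_add_val_sub u x u
  have := val_sub_add_val_sub u x v
  have := val_sub_add_val_sub u x y
  have := val_sub_add_val_sub u v y
  have := val_sub_add_val_sub u v u
  simp only [sub_self, val_zero] at *
  omega

theorem cycleGraph_val_sub_le_length (p : (cycleGraph n).Walk u v)
    (h : openArc u v ⊆ p.support.toFinset) : (v - u).val ≤ p.length := by
  have hsub : ({w | (w - u).val ≤ (v - u).val} : Finset (Fin n)) ⊆ p.support.toFinset := by
    intro w hw
    rw [mem_filter] at hw
    by_cases hwu : w = u
    · simp [hwu]
    by_cases hwv : w = v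
    · simp [hwv]
    exact h (mem_openArc_of_le hw.2 hwu hwv)
  have := card_le_card hsub
  have := p.support.toFinset_card_le
  rw [card_filter_val_sub_le, Walk.length_support] at *
  omega

theorem cycleGraph_min_le_length (p : (cycleGraph n).Walk u v) :
    min (v - u).val (u - v).val ≤ p.length := by
  rcases cycleGraph_openArc_subset_support_or p with h | h
  · exact min_le_of_left_le (cycleGraph_val_sub_le_length p h)
  · simpa using min_le_of_right_le (cycleGraph_val_sub_le_length p.reverse (by simpa using h))

theorem cycleGraph_dist (hn : 1 < n) (u v : Fin n) :
    (cycleGraph n).dist u v = min (v - u).val (u - v).val := by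
  obtain ⟨p, hp, -⟩ := cycleGraph_exists_arc_walk hn u v
  obtain ⟨q, hq, -⟩ := cycleGraph_exists_arc_walk hn v u
  obtain ⟨r, hr⟩ := p.reachable.exists_walk_length_eq_dist
  refine le_antisymm (le_min (hp ▸ dist_le p) ?_) (hr ▸ cycleGraph_min_le_length r)
  exact hq ▸ dist_comm (G := cycleGraph n) ▸ dist_le q

theorem cycleGraph_xVisible_of_isClearArc (hn : 1 < n) (h : IsClearArc X u v) :
    (cycleGraph n).XVisible X u v := by
  obtain ⟨p, hp, hsupp⟩ := cycleGraph_exists_arc_walk hn u v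
  have hdist : (cycleGraph n).dist u v = p.length := by
    rw [cycleGraph_dist hn, hp, min_eq_left_iff]
    obtain rfl | huv := eq_or_ne u v
    · simp
    · have := val_sub_add_val_sub_of_ne huv
      have := h.1
      omega
  refine ⟨p, p.isPath_of_length_eq_dist hdist.symm, hdist.symm, fun w hw hwX => ?_⟩
  by_contra! hne
  exact h.2 w (mem_openArc_of_le (hsupp w hw) hne.1 hne.2) hwX

theorem cycleGraph_isClearArc_of_subset_support (hn : 1 < n) (p : (cycleGraph n).Walk u v)
    (hp : p.length = (cycleGraph n).dist u v)
    (hX : ∀ w ∈ p.support, w ∈ X → w = u ∨ w = v)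
    (h : openArc u v ⊆ p.support.toFinset) : IsClearArc X u v := by
  refine ⟨?_, fun w hw hwX => ?_⟩
  · have hlen := cycleGraph_val_sub_le_length p h
    rw [hp, cycleGraph_dist hn] at hlen
    obtain rfl | huv := eq_or_ne u v
    · simp
    · have := val_sub_add_val_sub_of_ne huv
      omega
  · rcases hX w (List.mem_toFinset.mp (h hw)) hwX with rfl | rfl
    exacts [ne_left_of_mem_openArc hw rfl, ne_right_of_mem_openArc hw rfl]

theorem cycleGraph_xVisible_iff (hn : 1 < n) :
    (cycleGraph n).XVisible X u v ↔ IsClearArc X u v ∨ IsClearArc X v u := by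
  constructor
  · rintro ⟨p, -, hp, hX⟩
    rcases cycleGraph_openArc_subset_support_or p with h | h
    · exact .inl (cycleGraph_isClearArc_of_subset_support hn p hp hX h)
    · refine .inr (cycleGraph_isClearArc_of_subset_support hn p.reverse
        (by simp [hp, dist_comm]) ?_ (by simpa using h))
      intro w hw hwX
      exact (hX w (by simpa using hw) hwX).symm
  · rintro (h | h)
    exacts [cycleGraph_xVisible_of_isClearArc hn h, (cycleGraph_xVisible_of_isClearArc hn h).symm]

theorem cycleGraph_card_le_three (hn : 1 < n) {X : Finset (Fin n)}
    (hX : (cycleGraph n).IsMutualVisibilitySet ↑X) : X.card ≤ 3 := by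
  by_contra! hcard
  obtain ⟨u, hu⟩ : X.Nonempty := card_pos.mp (by omega)
  have hY : 3 ≤ (X.erase u).card := by rw [card_erase_of_mem hu]; omega
  obtain ⟨a, ha, hmin⟩ :=
    (X.erase u).exists_min_image (fun w => (w - u).val) (card_pos.mp (by omega))
  obtain ⟨b, hb, hmax⟩ :=
    (X.erase u).exists_max_image (fun w => (w - u).val) (card_pos.mp (by omega))
  obtain ⟨c, hc, hcb⟩ := exists_mem_ne (s := (X.erase u).erase a)
    (by rw [card_erase_of_mem ha]; omega) b
  obtain ⟨hca, hc⟩ := mem_erase.mp hc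
  have hac : (a - u).val < (c - u).val :=
    (hmin c hc).lt_of_ne ((val_sub_inj (u := u)).not.mpr (Ne.symm hca))
  have hcb : (c - u).val < (b - u).val :=
    (hmax c hc).lt_of_ne ((val_sub_inj (u := u)).not.mpr hcb)
  have hua : 0 < (a - u).val :=
    Nat.pos_of_ne_zero (val_sub_eq_zero_iff.not.mpr (mem_erase.mp ha).1)
  have hu' : u ∈ openArc b a :=
    mem_openArc_rotate (mem_openArc_rotate (mem_openArc.mpr ⟨hua, hac.trans hcb⟩))
  rcases (cycleGraph_xVisible_iff hn).mp (hX a (mem_of_mem_erase ha) b (mem_of_mem_erase hb))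
    with h | h
  · exact h.2 c (mem_openArc_of_lt hac hcb) (mem_of_mem_erase hc)
  · exact h.2 u hu' hu

open scoped Classical in
theorem cycleGraph_card_isMutualVisibilitySet_of_three_lt (hn : 1 < n) {k : ℕ} (hk : 3 < k) :
    #{X : Finset (Fin n) | (cycleGraph n).IsMutualVisibilitySet ↑X ∧ X.card = k} = 0 := by
  rw [card_eq_zero, filter_eq_empty_iff]
  rintro X - ⟨hX, rfl⟩
  exact absurd (cycleGraph_card_le_three hn hX) (by omega)

theorem cycleGraph_xVisible_iff_two_mul_le (hn : 1 < n) {w : Fin n}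
    (hX : ∀ x ∈ X, x = u ∨ x = v ∨ x ∈ openArc v u) (hw : w ∈ X)
    (hwa : w ∈ openArc v u) :
    (cycleGraph n).XVisible X u v ↔ 2 * (v - u).val ≤ n := by
  rw [cycleGraph_xVisible_iff hn]
  refine ⟨fun h => h.elim And.left fun h => absurd hw (h.2 w hwa), fun h => .inl ⟨h, ?_⟩⟩
  intro x hx hxX
  rcases hX x hxX with rfl | rfl | hx'
  exacts [ne_left_of_mem_openArc hx rfl, ne_right_of_mem_openArc hx rfl,
    notMem_openArc_swap hx hx']

theorem cycleGraph_isMutualVisibilitySet_triple_iff (hn : 1 < n) {a b c : Fin n}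
    (hb : b ∈ openArc a c) :
    (cycleGraph n).IsMutualVisibilitySet {a, b, c} ↔
      2 * (b - a).val ≤ n ∧ 2 * (c - b).val ≤ n ∧ 2 * (a - c).val ≤ n := by
  have hc := mem_openArc_rotate hb
  have ha := mem_openArc_rotate hc
  rw [isMutualVisibilitySet_triple_iff, cycleGraph_xVisible_iff_two_mul_le hn ?_ (by simp) hc,
    cycleGraph_xVisible_iff_two_mul_le hn ?_ (by simp) ha,
    cycleGraph_xVisible_iff_two_mul_le hn ?_ (by simp) hb]
  all_goals rintro x (rfl | rfl | rfl) <;> simp [ha, hb, hc]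

end SimpleGraph

theorem sum_Icc_id_mul_two (k : ℕ) : (∑ i ∈ Icc 1 k, i) * 2 = k * (k + 1) := by
  induction k with
  | zero => simp
  | succ k ih =>
    rw [sum_Icc_succ_top (by omega), add_mul, ih]
    ring

/-- The offsets `(s, t)` for which `{a, a + s, a + t}` cuts `C_n` into gaps `s`, `t - s`,
`n - t` of length at most `n / 2`. -/
def balancedOffsets (n : ℕ) : Finset (ℕ × ℕ) :=
  {st ∈ range n ×ˢ range n |
    0 < st.1 ∧ st.1 < st.2 ∧
      2 * st.1 ≤ n ∧ 2 * (st.2 - st.1) ≤ n ∧ 2 * (n - st.2) ≤ n}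

theorem mem_balancedOffsets {n s t : ℕ} :
    (s, t) ∈ balancedOffsets n ↔
      t < n ∧ 0 < s ∧ s < t ∧ 2 * s ≤ n ∧ 2 * (t - s) ≤ n ∧ 2 * (n - t) ≤ n := by
  simp only [balancedOffsets, mem_filter, mem_product, mem_range]
  omega

theorem card_balancedOffsets (n : ℕ) :
    #(balancedOffsets n) =
      ∑ s ∈ Icc 1 (n / 2), (min (n - 1) (s + n / 2) + 1 - max (s + 1) (n - n / 2)) := by
  rw [card_eq_sum_card_fiberwise (f := Prod.fst) (t := Icc 1 (n / 2))]
  · refine sum_congr rfl fun s hs => ?_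
    have : {st ∈ balancedOffsets n | st.1 = s} =
        {s} ×ˢ Icc (max (s + 1) (n - n / 2)) (min (n - 1) (s + n / 2)) := by
      ext ⟨s', t⟩
      simp only [mem_filter, mem_balancedOffsets, mem_product, mem_singleton, mem_Icc] at hs ⊢
      omega
    rw [this, card_product, card_singleton, one_mul, Nat.card_Icc]
  · rintro ⟨s, t⟩ h
    simp only [mem_coe, mem_balancedOffsets, mem_Icc] at h ⊢
    omega

theorem eight_mul_card_balancedOffsets_of_odd {n : ℕ} (hn : Odd n) :
    8 * #(balancedOffsets n) = n ^ 2 - 1 := by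
  obtain ⟨k, rfl⟩ := hn
  rw [card_balancedOffsets, show (2 * k + 1) / 2 = k by omega,
    sum_congr rfl fun s hs => show _ = s by rw [mem_Icc] at hs; omega]
  have := sum_Icc_id_mul_two k
  have : (2 * k + 1) ^ 2 = 4 * (k * (k + 1)) + 1 := by ring
  omega

theorem eight_mul_card_balancedOffsets_of_even {n : ℕ} (hn : Even n) :
    8 * #(balancedOffsets n) = (n - 2) * (n + 8) := by
  obtain ⟨_ | k, rfl⟩ := hn
  · simp [card_balancedOffsets]
  rw [card_balancedOffsets, show (k + 1 + (k + 1)) / 2 = k + 1 by omega,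
    sum_Icc_succ_top (by omega),
    sum_congr rfl fun s hs => show _ = s + 1 by rw [mem_Icc] at hs; omega,
    sum_add_distrib, sum_const, Nat.card_Icc, smul_eq_mul]
  have := sum_Icc_id_mul_two k
  have : (k + 1 + (k + 1) - 2) * (k + 1 + (k + 1) + 8) = 4 * (k * (k + 1)) + 16 * k := by
    rw [show k + 1 + (k + 1) - 2 = 2 * k by omega]
    ring
  omega

namespace SimpleGraph

open Fin

variable {n : ℕ} [NeZero n]

theorem cycleGraph_isMutualVisibilitySet_of_mem_balancedOffsets (hn : 1 < n) (a : Fin n)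
    {s t : ℕ} (h : (s, t) ∈ balancedOffsets n) :
    (cycleGraph n).IsMutualVisibilitySet ↑({a, a + (s : Fin n), a + (t : Fin n)} : Finset _) ∧
      #{a, a + (s : Fin n), a + (t : Fin n)} = 3 := by
  obtain ⟨ht, hs0, hst, h1, h2, h3⟩ := mem_balancedOffsets.mp h
  have hbs := val_add_natCast_sub a (s := s) (by omega)
  have hct := val_add_natCast_sub a (s := t) ht
  set b := a + (s : Fin n)
  set c := a + (t : Fin n)
  have hb : b ∈ openArc a c := mem_openArc.mpr (by omega)
  have hca : c ≠ a := val_sub_eq_zero_iff.not.mp (by omega)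
  refine ⟨?_, card_eq_three.mpr ⟨a, b, c, (ne_left_of_mem_openArc hb).symm, hca.symm,
    ne_right_of_mem_openArc hb, rfl⟩⟩
  rw [coe_insert, coe_insert, coe_singleton, cycleGraph_isMutualVisibilitySet_triple_iff hn hb]
  have := val_sub_add_val_sub a b c
  have := val_sub_add_val_sub_of_ne hca
  omega

theorem cycleGraph_exists_mem_balancedOffsets (hn : 1 < n) {a : Fin n} {X : Finset (Fin n)}
    (hX : (cycleGraph n).IsMutualVisibilitySet ↑X) (hcard : X.card = 3) (ha : a ∈ X) :
    ∃ st ∈ balancedOffsets n, {a, a + (st.1 : Fin n), a + (st.2 : Fin n)} = X := by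
  obtain ⟨y, z, hyz, hYZ⟩ := card_eq_two.mp (by rw [card_erase_of_mem ha, hcard] :
    (X.erase a).card = 2)
  have hya : y ≠ a := ne_of_mem_erase (hYZ ▸ mem_insert_self y {z})
  have hza : z ≠ a := ne_of_mem_erase (hYZ ▸ mem_insert_of_mem (mem_singleton_self z))
  have hXa : X = {a, y, z} := by rw [← insert_erase ha, hYZ]
  wlog hlt : (y - a).val < (z - a).val generalizing y z
  · exact this z y hyz.symm (by rw [hYZ, pair_comm]) hza hya (by rw [hXa, pair_comm])
      ((not_lt.mp hlt).lt_of_ne ((val_sub_inj (u := a)).not.mpr hyz.symm))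
  have hy : y ∈ openArc a z :=
    mem_openArc.mpr ⟨Nat.pos_of_ne_zero (val_sub_eq_zero_iff.not.mpr hya), hlt⟩
  rw [hXa, coe_insert, coe_insert, coe_singleton,
    cycleGraph_isMutualVisibilitySet_triple_iff hn hy] at hX
  refine ⟨((y - a).val, (z - a).val), ?_, by simp only [add_natCast_val_sub, hXa]⟩
  have := val_sub_add_val_sub a y z
  have := val_sub_add_val_sub_of_ne hza.symm
  have := mem_openArc.mp hy
  rw [mem_balancedOffsets]
  omega

open scoped Classical in
theorem cycleGraph_card_triples_containing (hn : 1 < n) (a : Fin n) :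
    #{X ∈ ({X | (cycleGraph n).IsMutualVisibilitySet ↑X ∧ X.card = 3} :
      Finset (Finset (Fin n))) | a ∈ X} = #(balancedOffsets n) := by
  symm
  apply card_nbij (fun st => {a, a + (st.1 : Fin n), a + (st.2 : Fin n)})
  · rintro ⟨s, t⟩ h
    simpa using cycleGraph_isMutualVisibilitySet_of_mem_balancedOffsets hn a h
  · rintro ⟨s, t⟩ h ⟨s', t'⟩ h' heq
    rw [mem_coe, mem_balancedOffsets] at h h'
    exact Prod.ext_iff.mpr (add_natCast_triple_inj (by omega) (by omega) (by omega) (by omega)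
      (by omega) (by omega) heq)
  · intro X hX
    simp only [coe_filter, mem_filter, mem_univ, true_and, Set.mem_ofPred_eq] at hX
    obtain ⟨st, hst, rfl⟩ := cycleGraph_exists_mem_balancedOffsets hn hX.1.1 hX.1.2 hX.2
    exact ⟨st, hst, rfl⟩

open scoped Classical in
theorem cycleGraph_three_mul_card_triples (hn : 1 < n) :
    3 * #{X : Finset (Fin n) | (cycleGraph n).IsMutualVisibilitySet ↑X ∧ X.card = 3} =
      n * #(balancedOffsets n) := by
  have h := sum_card fun a => cycleGraph_card_triples_containing hn a
  rw [sum_congr rfl fun X hX => (mem_filter.mp hX).2.2, Finset.sum_const, smul_eq_mul,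
    Fintype.card_fin] at h
  linarith

open scoped Classical in
theorem cycleGraph_card_triples (hn : 3 ≤ n) :
    #{X : Finset (Fin n) | (cycleGraph n).IsMutualVisibilitySet ↑X ∧ X.card = 3} =
      if Odd n then n * (n ^ 2 - 1) / 24 else (n - 2) * n * (n + 8) / 24 := by
  have h3 := cycleGraph_three_mul_card_triples (n := n) (by omega)
  have : n * (8 * #(balancedOffsets n)) = 8 * (n * #(balancedOffsets n)) := by ring
  split_ifs with h
  · rw [← eight_mul_card_balancedOffsets_of_odd h]
    omega
  · rw [show (n - 2) * n * (n + 8) = n * ((n - 2) * (n + 8)) by ring,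
      ← eight_mul_card_balancedOffsets_of_even (Nat.not_odd_iff_even.mp h)]
    omega

end SimpleGraph

open SimpleGraph in
open scoped Classical in
theorem visPoly_cycle (n : ℕ) (hn : 3 ≤ n) :
    visPoly (cycleGraph n) = 1 + (n : Polynomial ℤ) * Polynomial.X +
      ((n.choose 2 : ℕ) : Polynomial ℤ) * Polynomial.X ^ 2 +
      (((if Odd n then n * (n ^ 2 - 1) / 24 else (n - 2) * n * (n + 8) / 24 : ℕ)) :
        Polynomial ℤ) * Polynomial.X ^ 3 ∧
    (∀ X : Finset (Fin n), (cycleGraph n).IsMutualVisibilitySet ↑X → X.card ≤ 3) ∧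
    (∃ X : Finset (Fin n), X.card = 3 ∧ (cycleGraph n).IsMutualVisibilitySet ↑X) := by
  have : NeZero n := ⟨by omega⟩
  have hsmall (k : ℕ) (hk : k ≤ 2) :=
    cycleGraph_preconnected.card_isMutualVisibilitySet_of_le_two (G := cycleGraph n) hk
  rw [Fintype.card_fin] at hsmall
  refine ⟨?_, fun X => cycleGraph_card_le_three (by omega), ?_⟩
  · rw [← cycleGraph_card_triples hn]
    ext k
    simp only [visPoly_coeff, Polynomial.coeff_add, Polynomial.coeff_one,
      Polynomial.coeff_natCast_mul, Polynomial.coeff_X_pow, Polynomial.coeff_X]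
    obtain _ | _ | _ | _ | k := k
    · rw [hsmall 0 (by omega)]
      simp
    · rw [hsmall 1 (by omega)]
      simp
    · rw [hsmall 2 (by omega)]
      simp
    · simp
    · rw [cycleGraph_card_isMutualVisibilitySet_of_three_lt (by omega) (by omega)]
      simp
  · obtain ⟨hX, hcard⟩ := cycleGraph_isMutualVisibilitySet_of_mem_balancedOffsets (by omega) 0
      ((mem_balancedOffsets (n := n) (s := n / 2) (t := n - 1)).mpr (by omega))
    exact ⟨_, hcard, hX⟩
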